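/- For |q|<1, ∑_{n≥0} q^{4n+2} (q^{2n+6};q^2)_∞ (q^{2n+2};q^2)_∞ / (q^{2n+1};q^2)_∞^2 = q^2(1+q)/((1-q)(1-q^3)^2). -/

import Mathlib

open scoped BigOperators

noncomputable def qPoch (a q : ℂ) (n : ℕ) : ℂ := ∏ j ∈ Finset.range n, (1 - a * q ^ j)

noncomputable def qPochInf (a q : ℂ) : ℂ := ∏' j : ℕ, (1 - a * q ^ j)

/-! The summand is `q²` times the `n`-th term of the q-Gauss series with base `p = q²`,
`a = b = q`, `c = q⁶`. Writing `F c` for that series, the terms telescope so that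
`(1 - c/ab) F c = (1 - c/a) (1 - c/b) F (c p)`. Iterating `N` times and letting `c pᴺ → 0`
(dominated convergence, the terms being `O(|c/ab|ⁿ)` uniformly) gives Gauss's summation
`F c · (c/ab; p)_∞ = (p; p)_∞ (c/a; p)_∞ (c/b; p)_∞ / ((a; p)_∞ (b; p)_∞)`.
For the chosen parameters the infinite products cancel up to the factors
`1 - q`, `1 - q²`, `1 - q³`, leaving a rational function of `q`. -/

open Filter Topology

theorem tsum_sub_succ_of_tendsto {G : Type*} [AddCommGroup G] [TopologicalSpace G]
    [IsTopologicalAddGroup G] [T2Space G] {g : ℕ → G} {l : G}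
    (hs : Summable fun n => g n - g (n + 1)) (hg : Tendsto g atTop (𝓝 l)) :
    ∑' n, (g n - g (n + 1)) = g 0 - l :=
  tendsto_nhds_unique hs.hasSum.tendsto_sum_nat <| by
    simpa only [Finset.sum_range_sub'] using tendsto_const_nhds.sub hg

section Pochhammer

variable {p : ℂ}

lemma norm_mul_pow_le (hp : ‖p‖ ≤ 1) (x : ℂ) (n : ℕ) : ‖x * p ^ n‖ ≤ ‖x‖ := by
  rw [norm_mul, norm_pow]
  exact mul_le_of_le_one_right (norm_nonneg x) (pow_le_one₀ (norm_nonneg p) hp)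

lemma summable_norm_mul_pow (hp : ‖p‖ < 1) (a : ℂ) : Summable fun j : ℕ => ‖a * p ^ j‖ := by
  simpa [norm_mul, norm_pow] using (summable_geometric_of_lt_one (norm_nonneg p) hp).mul_left ‖a‖

lemma multipliable_one_sub_mul_pow (hp : ‖p‖ < 1) (a : ℂ) :
    Multipliable fun j : ℕ => 1 - a * p ^ j := by
  simpa [sub_eq_add_neg] using multipliable_one_add_of_summable (f := fun j => -(a * p ^ j))
    (by simpa using summable_norm_mul_pow hp a)

lemma tendsto_qPoch (hp : ‖p‖ < 1) (a : ℂ) : Tendsto (qPoch a p) atTop (𝓝 (qPochInf a p)) :=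
  (multipliable_one_sub_mul_pow hp a).tendsto_prod_tprod_nat

lemma qPochInf_eq_qPoch_mul (hp : ‖p‖ < 1) (a : ℂ) (n : ℕ) :
    qPochInf a p = qPoch a p n * qPochInf (a * p ^ n) p := by
  have h : Multipliable fun j => 1 - a * p ^ (j + n) :=
    (multipliable_one_sub_mul_pow hp (a * p ^ n)).congr fun j => by ring
  unfold qPochInf qPoch
  rw [← Multipliable.prod_mul_tprod_nat_mul' (f := fun i => 1 - a * p ^ i) (k := n) h]
  congr 1
  exact tprod_congr fun j => by ring

lemma qPochInf_eq_one_sub_mul (hp : ‖p‖ < 1) (a : ℂ) :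
    qPochInf a p = (1 - a) * qPochInf (a * p) p := by
  simpa [qPoch] using qPochInf_eq_qPoch_mul hp a 1

lemma qPochInf_zero (p : ℂ) : qPochInf 0 p = 1 := by
  simp [qPochInf]

lemma qPochInf_ne_zero (hp : ‖p‖ < 1) {a : ℂ} (ha : ‖a‖ < 1) : qPochInf a p ≠ 0 := by
  have hlt (j : ℕ) : ‖a * p ^ j‖ < 1 := (norm_mul_pow_le hp.le a j).trans_lt ha
  simpa [qPochInf, sub_eq_add_neg] using
    tprod_one_add_ne_zero_of_summable (f := fun j => -(a * p ^ j))
      (fun j h => (hlt j).ne (by simpa using congrArg norm (add_neg_eq_zero.mp h).symm))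
      (by simpa using summable_norm_mul_pow hp a)

lemma qPochInf_mul_pow_ne_zero (hp : ‖p‖ < 1) {a : ℂ} (ha : qPochInf a p ≠ 0) (n : ℕ) :
    qPochInf (a * p ^ n) p ≠ 0 :=
  right_ne_zero_of_mul (qPochInf_eq_qPoch_mul hp a n ▸ ha)

lemma norm_qPoch_le (hp : ‖p‖ < 1) (a : ℂ) (n : ℕ) :
    ‖qPoch a p n‖ ≤ Real.exp (‖a‖ / (1 - ‖p‖)) := by
  calc ‖qPoch a p n‖ ≤ ∏ j ∈ Finset.range n, (1 + ‖a * p ^ j‖) :=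
        (Finset.norm_prod_le _ _).trans (Finset.prod_le_prod (fun _ _ => norm_nonneg _)
          fun j _ => (norm_sub_le _ _).trans_eq (by rw [norm_one]))
    _ ≤ Real.exp (∑ j ∈ Finset.range n, ‖a * p ^ j‖) :=
        Real.prod_one_add_le_exp_sum _ fun _ => norm_nonneg _
    _ ≤ Real.exp (‖a‖ / (1 - ‖p‖)) := by
        gcongr
        refine (summable_norm_mul_pow hp a).sum_le_tsum _ (fun _ _ => norm_nonneg _) |>.trans_eq ?_
        simp_rw [norm_mul, norm_pow]
        rw [tsum_mul_left, tsum_geometric_of_lt_one (norm_nonneg p) hp, div_eq_mul_inv]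

lemma norm_qPochInf_le (hp : ‖p‖ < 1) (a : ℂ) : ‖qPochInf a p‖ ≤ Real.exp (‖a‖ / (1 - ‖p‖)) :=
  le_of_tendsto' (tendsto_qPoch hp a).norm (norm_qPoch_le hp a)

lemma norm_inv_qPochInf_mul_pow_le (hp : ‖p‖ < 1) {a : ℂ} (ha : qPochInf a p ≠ 0) (n : ℕ) :
    ‖(qPochInf (a * p ^ n) p)⁻¹‖ ≤ Real.exp (‖a‖ / (1 - ‖p‖)) / ‖qPochInf a p‖ := by
  have hinv : (qPochInf (a * p ^ n) p)⁻¹ = qPoch a p n / qPochInf a p := by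
    have := qPochInf_mul_pow_ne_zero hp ha n
    have := left_ne_zero_of_mul (qPochInf_eq_qPoch_mul hp a n ▸ ha)
    rw [qPochInf_eq_qPoch_mul hp a n]
    field_simp
  rw [hinv, norm_div]
  gcongr
  exact norm_qPoch_le hp a n

lemma continuous_qPochInf (hp : ‖p‖ < 1) : Continuous fun x => qPochInf x p := by
  refine continuous_iff_continuousAt.2 fun x₀ => ?_
  have hev : ∀ᶠ x in 𝓝 x₀, ∀ j : ℕ, ‖-(x * p ^ j)‖ ≤ (‖x₀‖ + 1) * ‖p‖ ^ j := by
    filter_upwards [Metric.closedBall_mem_nhds x₀ one_pos] with x hx j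
    rw [norm_neg, norm_mul, norm_pow]
    gcongr
    linarith [norm_le_norm_add_norm_sub' x x₀, mem_closedBall_iff_norm.1 hx]
  have hterm (j : ℕ) : Tendsto (fun x : ℂ => -(x * p ^ j)) (𝓝 x₀) (𝓝 (-(x₀ * p ^ j))) :=
    (continuous_id.mul continuous_const).neg.tendsto x₀
  simpa [ContinuousAt, qPochInf, sub_eq_add_neg] using
    tendsto_tprod_one_add_of_dominated_convergence
      ((summable_geometric_of_lt_one (norm_nonneg p) hp).mul_left _) hterm hev

end Pochhammer

/-- `(c; p)_∞ (p; p)_∞ / ((a; p)_∞ (b; p)_∞)` times the `n`-th term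
`(a; p)ₙ (b; p)ₙ / ((p; p)ₙ (c; p)ₙ) · (c/ab)ⁿ` of the series `₂φ₁(a, b; c; p, c/ab)`. -/
noncomputable def qGaussTerm (p a b c : ℂ) (n : ℕ) : ℂ :=
  (c / (a * b)) ^ n * qPochInf (c * p ^ n) p * qPochInf (p ^ (n + 1)) p /
    (qPochInf (a * p ^ n) p * qPochInf (b * p ^ n) p)

section QGauss

variable {p a b : ℂ}

lemma exists_norm_qGaussTerm_le (hp : ‖p‖ < 1) (ha : qPochInf a p ≠ 0) (hb : qPochInf b p ≠ 0)
    (R : ℝ) :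
    ∃ K, 0 ≤ K ∧ ∀ c n, ‖c‖ ≤ R → ‖qGaussTerm p a b c n‖ ≤ K * ‖c / (a * b)‖ ^ n := by
  let E (r : ℝ) : ℝ := Real.exp (r / (1 - ‖p‖))
  refine ⟨E R * E 1 * (E ‖a‖ / ‖qPochInf a p‖ * (E ‖b‖ / ‖qPochInf b p‖)), by positivity,
    fun c n hc => ?_⟩
  have hc' : ‖qPochInf (c * p ^ n) p‖ ≤ E R := by
    refine (norm_qPochInf_le hp _).trans (Real.exp_le_exp.2 ?_)
    gcongr
    exact (norm_mul_pow_le hp.le c n).trans hc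
  have hp' : ‖qPochInf (p ^ (n + 1)) p‖ ≤ E 1 := by
    refine (norm_qPochInf_le hp _).trans (Real.exp_le_exp.2 ?_)
    gcongr
    rw [norm_pow]
    exact pow_le_one₀ (norm_nonneg p) hp.le
  rw [qGaussTerm, div_eq_mul_inv, mul_inv, norm_mul, norm_mul, norm_mul, norm_mul, norm_pow]
  calc _ ≤ ‖c / (a * b)‖ ^ n * E R * E 1 *
        (E ‖a‖ / ‖qPochInf a p‖ * (E ‖b‖ / ‖qPochInf b p‖)) := by
        gcongr
        exacts [norm_inv_qPochInf_mul_pow_le hp ha n, norm_inv_qPochInf_mul_pow_le hp hb n]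
    _ = _ := by ring

lemma summable_qGaussTerm (hp : ‖p‖ < 1) (ha : qPochInf a p ≠ 0) (hb : qPochInf b p ≠ 0)
    {c : ℂ} (hc : ‖c / (a * b)‖ < 1) : Summable (qGaussTerm p a b c) := by
  obtain ⟨K, -, hK⟩ := exists_norm_qGaussTerm_le hp ha hb ‖c‖
  exact .of_norm_bounded ((summable_geometric_of_lt_one (norm_nonneg _) hc).mul_left K)
    fun n => hK c n le_rfl

lemma qGaussTerm_telescope (hp : ‖p‖ < 1) (ha0 : a ≠ 0) (hb0 : b ≠ 0) (ha : qPochInf a p ≠ 0)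
    (hb : qPochInf b p ≠ 0) (c : ℂ) (n : ℕ) :
    (1 - c / (a * b)) * qGaussTerm p a b c n -
        (1 - c / a) * (1 - c / b) * qGaussTerm p a b (c * p) n =
      (1 - p ^ n) * qGaussTerm p a b c n - (1 - p ^ (n + 1)) * qGaussTerm p a b c (n + 1) := by
  have hsplit {x : ℂ} (hx : qPochInf x p ≠ 0) : 1 - x ≠ 0 ∧ qPochInf (x * p) p ≠ 0 :=
    mul_ne_zero_iff.1 (qPochInf_eq_one_sub_mul hp x ▸ hx)
  obtain ⟨hα', hα⟩ := hsplit (qPochInf_mul_pow_ne_zero hp ha n)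
  obtain ⟨hβ', hβ⟩ := hsplit (qPochInf_mul_pow_ne_zero hp hb n)
  unfold qGaussTerm
  rw [mul_div_right_comm c p, mul_pow]
  simp only [pow_succ, ← mul_assoc, mul_right_comm c p]
  generalize p ^ n = u at *
  rw [qPochInf_eq_one_sub_mul hp (c * u), qPochInf_eq_one_sub_mul hp (u * p),
    qPochInf_eq_one_sub_mul hp (a * u), qPochInf_eq_one_sub_mul hp (b * u)]
  field_simp
  ring

lemma qGaussSum_functional_eq (hp : ‖p‖ < 1) (ha0 : a ≠ 0) (hb0 : b ≠ 0)
    (ha : qPochInf a p ≠ 0) (hb : qPochInf b p ≠ 0) {c : ℂ} (hc : ‖c / (a * b)‖ < 1) :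
    (1 - c / (a * b)) * ∑' n, qGaussTerm p a b c n =
      (1 - c / a) * (1 - c / b) * ∑' n, qGaussTerm p a b (c * p) n := by
  have hs := summable_qGaussTerm hp ha hb hc
  have hs' : Summable (qGaussTerm p a b (c * p)) := by
    refine summable_qGaussTerm hp ha hb ?_
    simpa [mul_div_right_comm] using (norm_mul_pow_le hp.le (c / (a * b)) 1).trans_lt hc
  have hg : Tendsto (fun n => (1 - p ^ n) * qGaussTerm p a b c n) atTop (𝓝 0) := by
    simpa using ((tendsto_pow_atTop_nhds_zero_of_norm_lt_one hp).const_sub 1).mul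
      hs.tendsto_atTop_zero
  have htel := qGaussTerm_telescope hp ha0 hb0 ha hb c
  have hsum := tsum_sub_succ_of_tendsto (((hs.mul_left _).sub (hs'.mul_left _)).congr htel) hg
  rw [← tsum_congr htel, (hs.mul_left _).tsum_sub (hs'.mul_left _), tsum_mul_left,
    tsum_mul_left] at hsum
  simpa [sub_eq_zero] using hsum

lemma qGaussSum_mul_qPoch (hp : ‖p‖ < 1) (ha0 : a ≠ 0) (hb0 : b ≠ 0)
    (ha : qPochInf a p ≠ 0) (hb : qPochInf b p ≠ 0) {c : ℂ} (hc : ‖c / (a * b)‖ < 1) (N : ℕ) :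
    (∑' n, qGaussTerm p a b c n) * qPoch (c / (a * b)) p N =
      (∑' n, qGaussTerm p a b (c * p ^ N) n) * qPoch (c / a) p N * qPoch (c / b) p N := by
  induction N with
  | zero => simp [qPoch]
  | succ N ih =>
    have hcN : ‖c * p ^ N / (a * b)‖ < 1 := by
      simpa [mul_div_right_comm] using (norm_mul_pow_le hp.le (c / (a * b)) N).trans_lt hc
    have h := qGaussSum_functional_eq hp ha0 hb0 ha hb hcN
    rw [mul_assoc c, ← pow_succ] at h
    simp only [qPoch, Finset.prod_range_succ] at ih ⊢
    linear_combination (1 - c / (a * b) * p ^ N) * ih +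
      (∏ j ∈ Finset.range N, (1 - c / a * p ^ j)) * (∏ j ∈ Finset.range N, (1 - c / b * p ^ j)) * h

lemma tendsto_qGaussSum (hp : ‖p‖ < 1) (ha : qPochInf a p ≠ 0) (hb : qPochInf b p ≠ 0)
    {c : ℂ} (hc : ‖c / (a * b)‖ < 1) :
    Tendsto (fun N => ∑' n, qGaussTerm p a b (c * p ^ N) n) atTop
      (𝓝 (qPochInf p p / (qPochInf a p * qPochInf b p))) := by
  obtain ⟨K, hK0, hK⟩ := exists_norm_qGaussTerm_le hp ha hb ‖c‖
  have hcont (n : ℕ) : Continuous fun x => qGaussTerm p a b x n :=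
    ((((continuous_id.div_const _).pow n).mul
      ((continuous_qPochInf hp).comp (continuous_id.mul continuous_const))).mul
      continuous_const).div_const _
  have hcpN : Tendsto (fun N => c * p ^ N) atTop (𝓝 0) := by
    simpa using (tendsto_pow_atTop_nhds_zero_of_norm_lt_one hp).const_mul c
  have hbound (N n : ℕ) : ‖qGaussTerm p a b (c * p ^ N) n‖ ≤ K * ‖c / (a * b)‖ ^ n := by
    refine (hK _ n (norm_mul_pow_le hp.le c N)).trans ?_
    rw [mul_div_right_comm]
    gcongr
    exact norm_mul_pow_le hp.le _ N
  have hlim := tendsto_tsum_of_dominated_convergence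
    ((summable_geometric_of_lt_one (norm_nonneg _) hc).mul_left K)
    (fun n => ((hcont n).tendsto 0).comp hcpN) (.of_forall hbound)
  rw [tsum_eq_single 0 fun n hn => by simp [qGaussTerm, zero_pow hn]] at hlim
  simpa [qGaussTerm, qPochInf_zero] using hlim

theorem qGauss (hp : ‖p‖ < 1) (ha0 : a ≠ 0) (hb0 : b ≠ 0) (ha : qPochInf a p ≠ 0)
    (hb : qPochInf b p ≠ 0) {c : ℂ} (hc : ‖c / (a * b)‖ < 1) :
    (∑' n, qGaussTerm p a b c n) * qPochInf (c / (a * b)) p =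
      qPochInf p p / (qPochInf a p * qPochInf b p) * qPochInf (c / a) p * qPochInf (c / b) p :=
  tendsto_nhds_unique ((tendsto_qPoch hp _).const_mul _) <|
    (((tendsto_qGaussSum hp ha hb hc).mul (tendsto_qPoch hp _)).mul (tendsto_qPoch hp _)).congr
      fun N => (qGaussSum_mul_qPoch hp ha0 hb0 ha hb hc N).symm

end QGauss

lemma summand_eq_qGaussTerm {q : ℂ} (hq0 : q ≠ 0) (n : ℕ) :
    q ^ (4 * n + 2) * qPochInf (q ^ (2 * n + 6)) (q ^ 2) * qPochInf (q ^ (2 * n + 2)) (q ^ 2) /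
        (qPochInf (q ^ (2 * n + 1)) (q ^ 2)) ^ 2 =
      q ^ 2 * qGaussTerm (q ^ 2) q q (q ^ 6) n := by
  rw [qGaussTerm, show q ^ 6 / (q * q) = q ^ 4 by field_simp,
    show q ^ 6 * (q ^ 2) ^ n = q ^ (2 * n + 6) by ring,
    show (q ^ 2) ^ (n + 1) = q ^ (2 * n + 2) by ring,
    show q * (q ^ 2) ^ n = q ^ (2 * n + 1) by ring]
  ring

theorem stmt_15 (q : ℂ) (hq : ‖q‖ < 1) :
    (∑' n : ℕ, q ^ (4 * n + 2) * qPochInf (q ^ (2 * n + 6)) (q ^ 2) *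
        qPochInf (q ^ (2 * n + 2)) (q ^ 2) / (qPochInf (q ^ (2 * n + 1)) (q ^ 2)) ^ 2) =
      q ^ 2 * (1 + q) / ((1 - q) * (1 - q ^ 3) ^ 2) := by
  rcases eq_or_ne q 0 with rfl | hq0
  · simp
  have hpow {k : ℕ} (hk : k ≠ 0) : ‖q ^ k‖ < 1 := by
    rw [norm_pow]
    exact pow_lt_one₀ (norm_nonneg q) hq hk
  have hq2 := hpow two_ne_zero
  have hP {k : ℕ} (hk : k ≠ 0) : qPochInf (q ^ k) (q ^ 2) ≠ 0 := qPochInf_ne_zero hq2 (hpow hk)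
  have hP1 : qPochInf q (q ^ 2) ≠ 0 := by simpa using hP one_ne_zero
  have hP4 := hP four_ne_zero
  have hP5 := hP (by norm_num : 5 ≠ 0)
  have h1 : 1 - q ≠ 0 := sub_ne_zero.2 fun h => by simp [← h] at hq
  have hc : q ^ 6 / (q * q) = q ^ 4 := by field_simp
  have hgauss := qGauss hq2 hq0 hq0 hP1 hP1 (c := q ^ 6) (hc ▸ hpow four_ne_zero)
  rw [hc, show q ^ 6 / q = q ^ 5 by field_simp,
    qPochInf_eq_one_sub_mul hq2 q, show q * q ^ 2 = q ^ 3 by ring,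
    qPochInf_eq_one_sub_mul hq2 (q ^ 3), show q ^ 3 * q ^ 2 = q ^ 5 by ring,
    qPochInf_eq_one_sub_mul hq2 (q ^ 2), show q ^ 2 * q ^ 2 = q ^ 4 by ring] at hgauss
  rw [tsum_congr (summand_eq_qGaussTerm hq0), tsum_mul_left]
  field_simp at hgauss ⊢
  exact mul_left_cancel₀ h1 (by linear_combination hgauss)
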